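/- arXiv:2505.11014 — 4 statements merged into one kernel-verified Lean document; each statement's English description precedes it below -/
import Mathlib

section
/- Let (Ω, 𝒜, P) be a probability space, X : Ω → 𝒳 a measurable map into a measurable space 𝒳, and 𝒢 = σ(X) the σ-algebra generated by X. Let T : Ω → ℝ be measurable with T ∈ {0,1} almost surely, and let Y₁ : Ω → ℝ be integrable with Y₁·T integrable. Assume (conditional ignorability) that Y₁ and T are conditionally independent given 𝒢, and (treatment positivity) that E[T | 𝒢] > 0 almost surely. Then E[Y₁ | 𝒢] = E[Y₁·T | 𝒢] / E[T | 𝒢] almost surely; that is, the conditional mean of the potential outcome under treatment is identified by the conditional mean of the observed outcome among the treated. -/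
/-!
Disintegrate `P` along `σ(X)` with the conditional expectation kernel `κ`. Conditional
independence of `Y₁` and `T` means that they are independent under `κ ω` for almost every `ω`,
so `E[Y₁ T | σ(X)] = ∫ Y₁ T dκ = (∫ Y₁ dκ)(∫ T dκ) = E[Y₁ | σ(X)] E[T | σ(X)]`, and positivity of
`E[T | σ(X)]` lets us divide.
-/

open MeasureTheory ProbabilityTheory

/-- The σ-algebra generated by a map `X`. -/
abbrev sigmaGen {Ω 𝒳 : Type*} [MeasurableSpace 𝒳] (X : Ω → 𝒳) : MeasurableSpace Ω :=
  MeasurableSpace.comap X inferInstance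

namespace ProbabilityTheory

variable {Ω β β' : Type*} {m mΩ : MeasurableSpace Ω} [StandardBorelSpace Ω] {hm : m ≤ mΩ}
  {μ : Measure Ω} [IsFiniteMeasure μ]

/-- Since `condExpKernel μ m ∘ₘ μ.trim hm = μ`, a `μ`-null set is `condExpKernel μ m ω`-null for
almost every `ω`. -/
theorem CondIndepFun.congr_left {_ : MeasurableSpace β} {_ : MeasurableSpace β'}
    {f f' : Ω → β} {g : Ω → β'} (h : CondIndepFun m hm f g μ) (hff' : f =ᵐ[μ] f') :
    CondIndepFun m hm f' g μ :=
  Kernel.IndepFun.congr' h (Measure.ae_ae_of_ae_comp (by rwa [condExpKernel_comp_trim hm]))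
    (Filter.Eventually.of_forall fun _ => Filter.EventuallyEq.rfl)

theorem CondIndepFun.congr_right {_ : MeasurableSpace β} {_ : MeasurableSpace β'}
    {f : Ω → β} {g g' : Ω → β'} (h : CondIndepFun m hm f g μ) (hgg' : g =ᵐ[μ] g') :
    CondIndepFun m hm f g' μ :=
  (h.symm.congr_left hgg').symm

theorem CondIndepFun.ae_indepFun_condExpKernel {_ : MeasurableSpace β} {_ : MeasurableSpace β'}
    [MeasurableSpace.CountableOrCountablyGenerated Ω (β × β')] {f : Ω → β} {g : Ω → β'}
    (hf : Measurable f) (hg : Measurable g) (h : CondIndepFun m hm f g μ) :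
    ∀ᵐ ω ∂μ, IndepFun f g (condExpKernel μ m ω) := by
  refine ae_of_ae_trim hm ?_
  filter_upwards [(condIndepFun_iff_map_prod_eq_prod_map_map hf hg).1 h] with ω hω
  rw [indepFun_iff_map_prod_eq_prod_map_map hf.aemeasurable hg.aemeasurable]
  simpa [Kernel.map_apply _ hf, Kernel.map_apply _ hg, Kernel.map_apply _ (hf.prodMk hg),
    Kernel.prod_apply] using hω

theorem CondIndepFun.condExp_mul_of_measurable {f g : Ω → ℝ} (hf : Measurable f)
    (hg : Measurable g) (hf_int : Integrable f μ) (hg_int : Integrable g μ)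
    (hfg_int : Integrable (f * g) μ) (h : CondIndepFun m hm f g μ) :
    μ[f * g | m] =ᵐ[μ] μ[f | m] * μ[g | m] := by
  filter_upwards [condExp_ae_eq_integral_condExpKernel hm hfg_int,
    condExp_ae_eq_integral_condExpKernel hm hf_int, condExp_ae_eq_integral_condExpKernel hm hg_int,
    h.ae_indepFun_condExpKernel hf hg] with ω hfg hf' hg' hindep
  rw [hfg, Pi.mul_apply, hf', hg']
  exact hindep.integral_mul_eq_mul_integral hf.aestronglyMeasurable hg.aestronglyMeasurable

theorem CondIndepFun.condExp_mul {f g : Ω → ℝ} (hf : Integrable f μ) (hg : Integrable g μ)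
    (hfg : Integrable (f * g) μ) (h : CondIndepFun m hm f g μ) :
    μ[f * g | m] =ᵐ[μ] μ[f | m] * μ[g | m] := by
  have hf_mk := hf.1.ae_eq_mk
  have hg_mk := hg.1.ae_eq_mk
  have hfg_mk : f * g =ᵐ[μ] hf.1.mk f * hg.1.mk g := hf_mk.mul hg_mk
  calc μ[f * g | m] =ᵐ[μ] μ[hf.1.mk f * hg.1.mk g | m] := condExp_congr_ae hfg_mk
    _ =ᵐ[μ] μ[hf.1.mk f | m] * μ[hg.1.mk g | m] :=
      ((h.congr_left hf_mk).congr_right hg_mk).condExp_mul_of_measurable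
        hf.1.stronglyMeasurable_mk.measurable hg.1.stronglyMeasurable_mk.measurable
        (hf.congr hf_mk) (hg.congr hg_mk) (hfg.congr hfg_mk)
    _ =ᵐ[μ] μ[f | m] * μ[g | m] :=
      (condExp_congr_ae hf_mk.symm).mul (condExp_congr_ae hg_mk.symm)

end ProbabilityTheory

theorem conditional_mean_identification_general
    {Ω 𝒳 : Type*} [MeasurableSpace Ω] [StandardBorelSpace Ω]
    [MeasurableSpace 𝒳]
    (P : Measure Ω) [IsProbabilityMeasure P]
    (X : Ω → 𝒳) (hX : Measurable X)
    (T Y₁ : Ω → ℝ) (hT : Measurable T)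
    (hT01 : ∀ᵐ ω ∂P, T ω = 0 ∨ T ω = 1)
    (hY₁ : Integrable Y₁ P)
    (hY₁T : Integrable (fun ω => Y₁ ω * T ω) P)
    (hindep : CondIndepFun (sigmaGen X) hX.comap_le Y₁ T P)
    (hpos : ∀ᵐ ω ∂P, 0 < (P[T | sigmaGen X]) ω) :
    P[Y₁ | sigmaGen X]
      =ᵐ[P] fun ω =>
        (P[fun ω' => Y₁ ω' * T ω' | sigmaGen X]) ω / (P[T | sigmaGen X]) ω := by
  have hT_int : Integrable T P := by
    refine Integrable.of_bound hT.aestronglyMeasurable 1 ?_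
    filter_upwards [hT01] with ω hω
    rcases hω with h | h <;> simp [h]
  filter_upwards [hindep.condExp_mul hY₁ hT_int hY₁T, hpos] with ω hprod hω
  rw [← Pi.mul_def, hprod, Pi.mul_apply, mul_div_cancel_right₀ _ hω.ne']

/-- **Identification of the conditional mean of the potential outcome under treatment.**
Under conditional ignorability (`Y₁ ⟂ T | σ(X)`) and treatment positivity
(`E[T | σ(X)] > 0` a.s.), `E[Y₁ | σ(X)] = E[Y₁·T | σ(X)] / E[T | σ(X)]` a.s. -/
theorem conditional_mean_identification
    {Ω 𝒳 : Type*} [MeasurableSpace Ω] [StandardBorelSpace Ω] [Nonempty Ω]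
    [MeasurableSpace 𝒳]
    (P : Measure Ω) [IsProbabilityMeasure P]
    (X : Ω → 𝒳) (hX : Measurable X)
    (T Y₁ : Ω → ℝ) (hT : Measurable T)
    (hT01 : ∀ᵐ ω ∂P, T ω = 0 ∨ T ω = 1)
    (hY₁ : Integrable Y₁ P)
    (hY₁T : Integrable (fun ω => Y₁ ω * T ω) P)
    (hindep : CondIndepFun (sigmaGen X) hX.comap_le Y₁ T P)
    (hpos : ∀ᵐ ω ∂P, 0 < (P[T | sigmaGen X]) ω) :
    P[Y₁ | sigmaGen X]
      =ᵐ[P] fun ω =>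
        (P[fun ω' => Y₁ ω' * T ω' | sigmaGen X]) ω / (P[T | sigmaGen X]) ω :=
  conditional_mean_identification_general P X hX T Y₁ hT hT01 hY₁ hY₁T hindep hpos
end

section
/- Let (Ω, 𝒜, P) be a probability space, X : Ω → 𝒳 a measurable map into a measurable space 𝒳, and 𝒢 = σ(X). Let ℋ = σ(X, T) denote the σ-algebra generated jointly by X and a square-integrable random variable T. Suppose the outcome follows the partially linear model Y = θ(X)·T + g(X) + γ, where θ, g : 𝒳 → ℝ are measurable with θ∘X bounded, g∘X and γ square-integrable, and E[γ | ℋ] = 0 almost surely. Then almost surely, E[(Y − E[Y | 𝒢])·(T − E[T | 𝒢]) | 𝒢] = θ(X)·E[(T − E[T | 𝒢])² | 𝒢]; that is, the conditional covariance of Y and T given X equals θ(X) times the conditional variance of T given X. -/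
open MeasureTheory ProbabilityTheory

/-- The σ-algebra generated jointly by `X` and `T`. -/
abbrev sigmaGen₂ {Ω 𝒳 : Type*} [MeasurableSpace 𝒳] (X : Ω → 𝒳) (T : Ω → ℝ) :
    MeasurableSpace Ω :=
  MeasurableSpace.comap (fun ω => (X ω, T ω)) inferInstance

/-!
Let `Y = a T + b + γ` and `T̃ = T - E[T | m]`. Since `a` and `b` are `m`-measurable and `γ` has
conditional mean zero already given the finer `m₂`, the residual `Y - E[Y | m]` equals `a T̃ + γ`. Hence
`(Y - E[Y | m]) T̃ = a T̃² + T̃ γ`; the factor `a` pulls out of `E[· | m]`, and `E[T̃ γ | m] = 0`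
because `T̃` is `m₂`-measurable, so `E[T̃ γ | m₂] = T̃ E[γ | m₂] = 0`, and the tower property
passes this down to `m`.
-/

namespace MeasureTheory

variable {Ω : Type*} {m m₂ m₀ : MeasurableSpace Ω} {μ : Measure Ω}

theorem condExp_eq_zero_of_le_of_condExp_eq_zero (hm : m ≤ m₂) (hm₂ : m₂ ≤ m₀)
    [SigmaFinite (μ.trim hm₂)] {f : Ω → ℝ} (hf : μ[f | m₂] =ᵐ[μ] 0) : μ[f | m] =ᵐ[μ] 0 := by
  have h := (condExp_condExp_of_le (μ := μ) (f := f) hm hm₂).symm.trans (condExp_congr_ae hf)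
  rwa [condExp_zero] at h

theorem condExp_mul_eq_zero_of_condExp_eq_zero {h f : Ω → ℝ} (hh : StronglyMeasurable[m] h)
    (hhf : Integrable (h * f) μ) (hf : Integrable f μ) (hf₀ : μ[f | m] =ᵐ[μ] 0) :
    μ[h * f | m] =ᵐ[μ] 0 := by
  filter_upwards [condExp_mul_of_stronglyMeasurable_left hh hhf hf, hf₀] with ω hω hω₀
  simp [hω, hω₀]

section PartiallyLinear

variable [IsFiniteMeasure μ] (hm : m ≤ m₂) (hm₂ : m₂ ≤ m₀)
  {a b T γ : Ω → ℝ} {C : ℝ} (ha : StronglyMeasurable[m] a) (haC : ∀ᵐ ω ∂μ, ‖a ω‖ ≤ C)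
  (hb : StronglyMeasurable[m] b)
include hm hm₂ ha haC hb

theorem condExp_partiallyLinear (hbi : Integrable b μ) (hT : Integrable T μ)
    (hγ : Integrable γ μ) (hγ₀ : μ[γ | m₂] =ᵐ[μ] 0) :
    μ[a * T + b + γ | m] =ᵐ[μ] a * μ[T | m] + b := by
  have haT : Integrable (a * T) μ := hT.bdd_mul (ha.mono (hm.trans hm₂)).aestronglyMeasurable haC
  filter_upwards [condExp_add (haT.add hbi) hγ m, condExp_add haT hbi m,
    condExp_mul_of_stronglyMeasurable_left ha haT hT,
    condExp_eq_zero_of_le_of_condExp_eq_zero hm hm₂ hγ₀] with ω h₁ h₂ h₃ h₄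
  simp only [Pi.add_apply, Pi.zero_apply] at h₁ h₂ h₄ ⊢
  rw [h₁, h₂, h₃, condExp_of_stronglyMeasurable (hm.trans hm₂) hb hbi, h₄, add_zero]

theorem condExp_mul_sub_condExp_partiallyLinear (hbi : Integrable b μ)
    (hT : StronglyMeasurable[m₂] T) (hT2 : MemLp T 2 μ) (hγ : MemLp γ 2 μ)
    (hγ₀ : μ[γ | m₂] =ᵐ[μ] 0) :
    μ[(a * T + b + γ - μ[a * T + b + γ | m]) * (T - μ[T | m]) | m]
      =ᵐ[μ] a * μ[(T - μ[T | m]) ^ 2 | m] := by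
  set T' := T - μ[T | m]
  have hT'2 : MemLp T' 2 μ := hT2.sub (hT2.condExp one_le_two)
  have hT' : StronglyMeasurable[m₂] T' := hT.sub (stronglyMeasurable_condExp.mono hm)
  have hT'sq : Integrable (T' ^ 2) μ := hT'2.integrable_sq
  have haT'sq : Integrable (a * T' ^ 2) μ :=
    hT'sq.bdd_mul (ha.mono (hm.trans hm₂)).aestronglyMeasurable haC
  have hT'γ : Integrable (T' * γ) μ := hT'2.integrable_mul hγ
  have hresidual : (a * T + b + γ - μ[a * T + b + γ | m]) * T' =ᵐ[μ] a * T' ^ 2 + T' * γ := by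
    filter_upwards [condExp_partiallyLinear hm hm₂ ha haC hb hbi (hT2.integrable one_le_two)
      (hγ.integrable one_le_two) hγ₀] with ω hω
    simp only [Pi.add_apply, Pi.sub_apply, Pi.mul_apply, Pi.pow_apply, T'] at hω ⊢
    rw [hω]
    ring
  have hnoise : μ[T' * γ | m] =ᵐ[μ] 0 :=
    condExp_eq_zero_of_le_of_condExp_eq_zero hm hm₂ <|
      condExp_mul_eq_zero_of_condExp_eq_zero hT' hT'γ (hγ.integrable one_le_two) hγ₀
  filter_upwards [condExp_congr_ae hresidual, condExp_add haT'sq hT'γ m,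
    condExp_mul_of_stronglyMeasurable_left ha haT'sq hT'sq, hnoise] with ω h₁ h₂ h₃ h₄
  simp only [Pi.add_apply, Pi.zero_apply] at h₂ h₄
  rw [h₁, h₂, h₃, h₄, add_zero]

end PartiallyLinear

end MeasureTheory

/-- **Conditional covariance identity in the partially linear model.**
If `Y = θ(X)·T + g(X) + γ` with `E[γ | σ(X,T)] = 0` a.s., then the conditional covariance
of `Y` and `T` given `σ(X)` equals `θ(X)` times the conditional variance of `T` given `σ(X)`. -/
theorem partially_linear_conditional_covariance
    {Ω 𝒳 : Type*} [MeasurableSpace Ω] [MeasurableSpace 𝒳]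
    (P : Measure Ω) [IsProbabilityMeasure P]
    (X : Ω → 𝒳) (hX : Measurable X)
    (T : Ω → ℝ) (hT : Measurable T) (hT2 : MemLp T 2 P)
    (θ g : 𝒳 → ℝ) (hθ : Measurable θ) (hg : Measurable g)
    (C : ℝ) (hθbdd : ∀ ω, |θ (X ω)| ≤ C)
    (hgX2 : MemLp (fun ω => g (X ω)) 2 P)
    (γ : Ω → ℝ) (hγ2 : MemLp γ 2 P)
    (hγmean : P[γ | sigmaGen₂ X T] =ᵐ[P] 0)
    (Y : Ω → ℝ) (hYdef : ∀ ω, Y ω = θ (X ω) * T ω + g (X ω) + γ ω) :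
    P[fun ω => (Y ω - (P[Y | sigmaGen X]) ω) * (T ω - (P[T | sigmaGen X]) ω) | sigmaGen X]
      =ᵐ[P] fun ω =>
        θ (X ω) * (P[fun ω' => (T ω' - (P[T | sigmaGen X]) ω') ^ 2 | sigmaGen X]) ω := by
  obtain rfl : Y = fun ω => θ (X ω) * T ω + g (X ω) + γ ω := funext hYdef
  have hXT : Measurable[sigmaGen₂ X T] fun ω => (X ω, T ω) := comap_measurable _
  have hle : sigmaGen X ≤ sigmaGen₂ X T := (measurable_fst.comp hXT).comap_le
  exact condExp_mul_sub_condExp_partiallyLinear hle (hX.prodMk hT).comap_le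
    (hθ.comp (comap_measurable X)).stronglyMeasurable (.of_forall hθbdd)
    (hg.comp (comap_measurable X)).stronglyMeasurable (hgX2.integrable one_le_two)
    (measurable_snd.comp hXT).stronglyMeasurable hT2 hγ2 hγmean
end

section
/- Let (Ω, 𝒜, P) be a probability space, X : Ω → 𝒳 a measurable map into a measurable space 𝒳, 𝒢 = σ(X), and ℋ = σ(X, T) for a square-integrable random variable T. Suppose the auxiliary outcome follows the partially linear model W = φ(X)·T + f(X) + δ where φ, f, α, θ : 𝒳 → ℝ are measurable, φ∘X and α∘X are bounded, f∘X and δ are square-integrable, E[δ | ℋ] = 0 almost surely, and the outcome link holds in the form θ(x) = α(x)·φ(x) for all x. Then the auxiliary component of the efficient score has mean zero at the truth: E[(α(X)·(W − E[W | 𝒢]) − θ(X)·(T − E[T | 𝒢]))·(T − E[T | 𝒢])] = 0. -/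
open MeasureTheory ProbabilityTheory

namespace MeasureTheory

variable {Ω : Type*} {m m₀ : MeasurableSpace Ω} {μ : Measure Ω}

lemma MemLp.mul_of_abs_le_left {p : ENNReal} {c f : Ω → ℝ} {C : ℝ}
    (hc : AEStronglyMeasurable c μ) (hcC : ∀ ω, |c ω| ≤ C) (hf : MemLp f p μ) :
    MemLp (fun ω => c ω * f ω) p μ :=
  hf.mul' (memLp_top_of_bound hc C (.of_forall hcC))

lemma condExp_ae_eq_zero_of_le {m₁ m₂ : MeasurableSpace Ω} (h₁₂ : m₁ ≤ m₂) (h₂ : m₂ ≤ m₀)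
    [SigmaFinite (μ.trim h₂)] {δ : Ω → ℝ} (hδ : μ[δ | m₂] =ᵐ[μ] 0) : μ[δ | m₁] =ᵐ[μ] 0 := by
  calc μ[δ | m₁] =ᵐ[μ] μ[μ[δ | m₂] | m₁] := (condExp_condExp_of_le h₁₂ h₂).symm
    _ =ᵐ[μ] μ[0 | m₁] := condExp_congr_ae hδ
    _ = 0 := condExp_zero

lemma integral_mul_eq_zero_of_condExp_ae_eq_zero (hm : m ≤ m₀) [SigmaFinite (μ.trim hm)]
    {g δ : Ω → ℝ} (hg : StronglyMeasurable[m] g) (hgδ : Integrable (g * δ) μ)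
    (hδ : Integrable δ μ) (hδ₀ : μ[δ | m] =ᵐ[μ] 0) : ∫ ω, g ω * δ ω ∂μ = 0 := by
  have hpull : μ[g * δ | m] =ᵐ[μ] 0 := by
    filter_upwards [condExp_mul_of_stronglyMeasurable_left hg hgδ hδ, hδ₀] with ω h h₀
    simp [h, h₀]
  calc ∫ ω, g ω * δ ω ∂μ = ∫ ω, μ[g * δ | m] ω ∂μ := (integral_condExp hm).symm
    _ = 0 := by simp [integral_congr_ae hpull]

lemma condExp_mul_add_add_ae_eq (hm : m ≤ m₀) [SigmaFinite (μ.trim hm)] {a b T δ : Ω → ℝ}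
    (ha : StronglyMeasurable[m] a) (hb : StronglyMeasurable[m] b) (haT : Integrable (a * T) μ)
    (hT : Integrable T μ) (hbi : Integrable b μ) (hδ : Integrable δ μ)
    (hδ₀ : μ[δ | m] =ᵐ[μ] 0) :
    μ[fun ω => a ω * T ω + b ω + δ ω | m] =ᵐ[μ] fun ω => a ω * μ[T | m] ω + b ω := by
  have hsum : μ[fun ω => a ω * T ω + b ω + δ ω | m] =ᵐ[μ] μ[a * T | m] + μ[b | m] + μ[δ | m] :=
    (condExp_add (haT.add hbi) hδ m).trans
      ((condExp_add haT hbi m).add (Filter.EventuallyEq.refl _ _))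
  filter_upwards [hsum, condExp_mul_of_stronglyMeasurable_left ha haT hT, hδ₀] with ω h hpull h₀
  simp only [Pi.add_apply, Pi.mul_apply, Pi.zero_apply] at h hpull h₀
  rw [h, hpull, h₀, condExp_of_stronglyMeasurable hm hb hbi, add_zero]

end MeasureTheory

theorem auxiliary_efficient_score_mean_zero_general
    {Ω 𝒳 : Type*} [MeasurableSpace Ω] [MeasurableSpace 𝒳]
    (P : Measure Ω) [IsProbabilityMeasure P]
    (X : Ω → 𝒳) (hX : Measurable X)
    (T : Ω → ℝ) (hT : Measurable T) (hT2 : MemLp T 2 P)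
    (φ f α θ : 𝒳 → ℝ) (hφ : Measurable φ) (hf : Measurable f)
    (hα : Measurable α)
    (Cφ : ℝ) (hφbdd : ∀ ω, |φ (X ω)| ≤ Cφ)
    (Cα : ℝ) (hαbdd : ∀ ω, |α (X ω)| ≤ Cα)
    (hfX2 : MemLp (fun ω => f (X ω)) 2 P)
    (δ : Ω → ℝ) (hδ2 : MemLp δ 2 P)
    (hδmean : P[δ | sigmaGen₂ X T] =ᵐ[P] 0)
    (hlink : ∀ x, θ x = α x * φ x)
    (W : Ω → ℝ) (hWdef : ∀ ω, W ω = φ (X ω) * T ω + f (X ω) + δ ω) :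
    ∫ ω, (α (X ω) * (W ω - (P[W | sigmaGen X]) ω)
          - θ (X ω) * (T ω - (P[T | sigmaGen X]) ω))
        * (T ω - (P[T | sigmaGen X]) ω) ∂P = 0 := by
  have hX₁ : Measurable[sigmaGen X] X := comap_measurable X
  have hXT₂ : Measurable[sigmaGen₂ X T] fun ω => (X ω, T ω) := comap_measurable _
  have hle : sigmaGen X ≤ sigmaGen₂ X T := (measurable_fst.comp hXT₂).comap_le
  have hm₂ : sigmaGen₂ X T ≤ ‹_› := (hX.prodMk hT).comap_le
  have hμW : P[W | sigmaGen X] =ᵐ[P] fun ω => φ (X ω) * P[T | sigmaGen X] ω + f (X ω) := by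
    rw [funext hWdef]
    exact condExp_mul_add_add_ae_eq hX.comap_le (hφ.comp hX₁).stronglyMeasurable
      (hf.comp hX₁).stronglyMeasurable
      ((hT2.mul_of_abs_le_left (hφ.comp hX).aestronglyMeasurable hφbdd).integrable one_le_two)
      (hT2.integrable one_le_two) (hfX2.integrable one_le_two) (hδ2.integrable one_le_two)
      (condExp_ae_eq_zero_of_le hle hm₂ hδmean)
  set g := fun ω => α (X ω) * (T ω - P[T | sigmaGen X] ω)
  have hg₂ : StronglyMeasurable[sigmaGen₂ X T] g :=
    (hα.comp (measurable_fst.comp hXT₂)).stronglyMeasurable.mul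
      ((measurable_snd.comp hXT₂).stronglyMeasurable.sub (stronglyMeasurable_condExp.mono hle))
  have hgL2 : MemLp g 2 P :=
    (hT2.sub (hT2.condExp one_le_two)).mul_of_abs_le_left (hα.comp hX).aestronglyMeasurable hαbdd
  calc _ = ∫ ω, g ω * δ ω ∂P :=
        integral_congr_ae (hμW.mono fun ω h => by simp only [g, hWdef, hlink, h]; ring)
    _ = 0 := integral_mul_eq_zero_of_condExp_ae_eq_zero hm₂ hg₂ (hgL2.integrable_mul hδ2)
        (hδ2.integrable one_le_two) hδmean

/-- **The auxiliary component of the efficient score has mean zero at the truth.**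
If `W = φ(X)·T + f(X) + δ` with `E[δ | σ(X,T)] = 0` a.s. and the outcome link gives
`θ(x) = α(x)·φ(x)`, then
`E[(α(X)·(W - E[W|σ(X)]) - θ(X)·(T - E[T|σ(X)]))·(T - E[T|σ(X)])] = 0`. -/
theorem auxiliary_efficient_score_mean_zero
    {Ω 𝒳 : Type*} [MeasurableSpace Ω] [MeasurableSpace 𝒳]
    (P : Measure Ω) [IsProbabilityMeasure P]
    (X : Ω → 𝒳) (hX : Measurable X)
    (T : Ω → ℝ) (hT : Measurable T) (hT2 : MemLp T 2 P)
    (φ f α θ : 𝒳 → ℝ) (hφ : Measurable φ) (hf : Measurable f)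
    (hα : Measurable α) (hθ : Measurable θ)
    (Cφ : ℝ) (hφbdd : ∀ ω, |φ (X ω)| ≤ Cφ)
    (Cα : ℝ) (hαbdd : ∀ ω, |α (X ω)| ≤ Cα)
    (hfX2 : MemLp (fun ω => f (X ω)) 2 P)
    (δ : Ω → ℝ) (hδ2 : MemLp δ 2 P)
    (hδmean : P[δ | sigmaGen₂ X T] =ᵐ[P] 0)
    (hlink : ∀ x, θ x = α x * φ x)
    (W : Ω → ℝ) (hWdef : ∀ ω, W ω = φ (X ω) * T ω + f (X ω) + δ ω) :
    ∫ ω, (α (X ω) * (W ω - (P[W | sigmaGen X]) ω)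
          - θ (X ω) * (T ω - (P[T | sigmaGen X]) ω))
        * (T ω - (P[T | sigmaGen X]) ω) ∂P = 0 :=
  auxiliary_efficient_score_mean_zero_general P X hX T hT hT2 φ f α θ hφ hf hα Cφ hφbdd Cα hαbdd
    hfX2 δ hδ2 hδmean hlink W hWdef
end

section
/- Let d₀, d₁, c be real numbers with d₀ > 0, d₁ > 0 and c ≠ 0, and consider the 2×2 real information matrix M = !![d₁ + d₀, c·d₁; c·d₁, c²·d₁]. Then M is invertible (its determinant equals c²·d₀·d₁ ≠ 0) and its inverse is M⁻¹ = !![d₀⁻¹, −c⁻¹·d₀⁻¹; −c⁻¹·d₀⁻¹, c⁻²·(d₀⁻¹ + d₁⁻¹)]. In particular, the (0,0)-entry of M⁻¹ equals d₀⁻¹, so the asymptotic variance for the treatment-effect parameter when the link slope must also be estimated equals the asymptotic variance using only primary data: V_b = V₀ = d₀⁻¹, i.e., incorporating auxiliary data provides no efficiency gain when the link slope α is unknown. -/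
open Matrix

/-- **No efficiency gain when the link slope is unknown.**
For the 2×2 information matrix `M = !![d₁ + d₀, c·d₁; c·d₁, c²·d₁]` with `d₀, d₁ > 0`
and `c ≠ 0`, the matrix is invertible with determinant `c²·d₀·d₁ ≠ 0`, its inverse is
`!![d₀⁻¹, -c⁻¹·d₀⁻¹; -c⁻¹·d₀⁻¹, c⁻²·(d₀⁻¹ + d₁⁻¹)]`, and in particular the (0,0)-entry
of the inverse — the asymptotic variance for the treatment-effect parameter — equals
`d₀⁻¹`, the asymptotic variance using only primary data. -/
theorem information_matrix_inverse_no_gain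
    (d₀ d₁ c : ℝ) (hd₀ : 0 < d₀) (hd₁ : 0 < d₁) (hc : c ≠ 0)
    (M : Matrix (Fin 2) (Fin 2) ℝ)
    (hM : M = !![d₁ + d₀, c * d₁; c * d₁, c ^ 2 * d₁]) :
    M.det = c ^ 2 * d₀ * d₁ ∧ M.det ≠ 0 ∧ IsUnit M ∧
      M⁻¹ = !![d₀⁻¹, -(c⁻¹ * d₀⁻¹); -(c⁻¹ * d₀⁻¹), (c ^ 2)⁻¹ * (d₀⁻¹ + d₁⁻¹)] ∧
      M⁻¹ 0 0 = d₀⁻¹ := by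
  have hdet : M.det = c ^ 2 * d₀ * d₁ := by
    subst hM; simp [Matrix.det_fin_two_of]; ring
  have hne : M.det ≠ 0 := by
    rw [hdet]
    positivity
  have hu : IsUnit M := M.isUnit_iff_isUnit_det.2 (isUnit_iff_ne_zero.2 hne)
  have hinv : M⁻¹ = !![d₀⁻¹, -(c⁻¹ * d₀⁻¹); -(c⁻¹ * d₀⁻¹), (c ^ 2)⁻¹ * (d₀⁻¹ + d₁⁻¹)] := by
    rw [Matrix.inv_eq_right_inv]
    subst hM
    ext i j
    fin_cases i <;> fin_cases j <;>
      simp [Matrix.mul_apply, Fin.sum_univ_succ] <;>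
      field_simp <;> ring
  refine ⟨hdet, hne, hu, hinv, ?_⟩
  rw [hinv]; simp
end
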